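/- Let K be a field. The power series ring K[[y]] has infinite transcendence degree over K. -/

import Mathlib

/-!
The prime subfield `F` of `K` is countable while `F⟦X⟧` is not, and an algebraic extension of a
countable domain is countable, so a transcendence basis of `F⟦X⟧` over `F` is infinite.
Algebraic independence over `F` survives extending the coefficients to `K`: it is `F`-linear
independence of the monomials, and a `K`-linear relation between power series with coefficients
in `F` yields an `F`-linear one after applying any `F`-linear functional `K → F` coefficientwise.
-/

open Cardinal PowerSeries MvPolynomial

instance Subfield.countable_bot (K : Type*) [DivisionRing K] : Countable (⊥ : Subfield K) := by
  rw [← Subfield.closure_empty, ← mk_le_aleph0_iff]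
  simpa using Subfield.cardinalMk_closure_le_max (∅ : Set K)

instance PowerSeries.uncountable (R : Type*) [Semiring R] [Nontrivial R] :
    Uncountable R⟦X⟧ := by
  rw [← aleph0_lt_mk_iff]
  calc ℵ₀ < 2 ^ ℵ₀ := cantor ℵ₀
    _ ≤ #R ^ ℵ₀ := power_le_power_right (two_le_iff.2 (exists_pair_ne R))
    _ = #(ℕ → R) := by simp
    _ ≤ #R⟦X⟧ := mk_le_of_injective (f := PowerSeries.mk) fun f g h => funext fun m => by
        simpa using congrArg (coeff m) h

universe u in
theorem IsTranscendenceBasis.infinite_of_uncountable {F : Type u} {A : Type*} [Field F]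
    [Countable F] [CommRing A] [IsDomain A] [Algebra F A] [Uncountable A] {ι : Type*}
    {x : ι → A} (hx : IsTranscendenceBasis F x) : Infinite ι := by
  by_contra! hfin
  have : Algebra.IsAlgebraic (Algebra.adjoin F (Set.range x)) A := hx.isAlgebraic
  have : Countable (Algebra.adjoin F (Set.range x)) := by
    rw [← mk_le_aleph0_iff, ← lift_le_aleph0.{_, u}]
    refine (Algebra.lift_cardinalMk_adjoin_le F _).trans (max_le (max_le ?_ ?_) le_rfl) <;> simp
  exact not_countable (α := A) <| mk_le_aleph0_iff.1 <|
    (Algebra.IsAlgebraic.cardinalMk_le_max (Algebra.adjoin F (Set.range x)) A).trans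
      (max_le mk_le_aleph0 le_rfl)

theorem exists_algebraicIndependent_fin_of_uncountable (F A : Type*) [Field F] [Countable F]
    [CommRing A] [IsDomain A] [Algebra F A] [Uncountable A] (n : ℕ) :
    ∃ f : Fin n → A, AlgebraicIndependent F f := by
  obtain ⟨s, hs⟩ := exists_isTranscendenceBasis F A
  have := hs.infinite_of_uncountable
  let e : Fin n ↪ s := Fin.valEmbedding.trans (Infinite.natEmbedding s)
  exact ⟨_, hs.1.comp e e.injective⟩

theorem LinearIndependent.map_powerSeries {F K : Type*} [Field F] [Ring K] [Algebra F K]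
    {ι : Type*} {v : ι → F⟦X⟧} (hv : LinearIndependent F v) :
    LinearIndependent K (fun i => PowerSeries.map (algebraMap F K) (v i)) := by
  rw [linearIndependent_iff'] at hv ⊢
  intro s c hc i hi
  rw [← Module.forall_dual_apply_eq_zero_iff F (c i)]
  intro lam
  refine hv s (fun j => lam (c j)) ?_ i hi
  ext m
  have := congrArg (fun f => lam (coeff m f)) hc
  simpa [map_sum, PowerSeries.coeff_map, ← Algebra.commutes, ← Algebra.smul_def, mul_comm]
    using this

theorem algebraicIndependent_iff_linearIndependent_monomials {R A : Type*} [CommRing R]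
    [CommRing A] [Algebra R A] {σ : Type*} {x : σ → A} :
    AlgebraicIndependent R x ↔
      LinearIndependent R (fun e : σ →₀ ℕ => aeval x (monomial e (1 : R))) := by
  have hmonomials : (fun e : σ →₀ ℕ => aeval x (monomial e (1 : R))) =
      (aeval x).toLinearMap ∘ basisMonomials σ R := by
    ext e
    simp [coe_basisMonomials]
  rw [algebraicIndependent_iff_injective_aeval, hmonomials]
  exact ⟨fun h => (basisMonomials σ R).linearIndependent.map' _ (LinearMap.ker_eq_bot.2 h),
    LinearMap.injective_of_linearIndependent (basisMonomials σ R).span_eq⟩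

theorem AlgebraicIndependent.map_powerSeries {F K : Type*} [Field F] [CommRing K] [Algebra F K]
    {σ : Type*} {g : σ → F⟦X⟧} (hg : AlgebraicIndependent F g) :
    AlgebraicIndependent K (fun i => PowerSeries.map (algebraMap F K) (g i)) := by
  rw [algebraicIndependent_iff_linearIndependent_monomials] at hg ⊢
  simpa [aeval_monomial, map_finsuppProd] using hg.map_powerSeries (K := K)

/-- The power series ring `K[[y]]` over a field `K` has infinite transcendence degree over `K`:
for every `n` there exist `n` elements of `K[[y]]` which are algebraically independent over
`K`. -/
theorem stmt3 (K : Type*) [Field K] (n : ℕ) :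
    ∃ f : Fin n → PowerSeries K, AlgebraicIndependent K f := by
  obtain ⟨g, hg⟩ :=
    exists_algebraicIndependent_fin_of_uncountable (⊥ : Subfield K) (⊥ : Subfield K)⟦X⟧ n
  exact ⟨_, hg.map_powerSeries⟩
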